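/- arXiv:0807.4007 — 4 statements merged into one kernel-verified Lean document; each statement's English description precedes it below -/
import Mathlib

section
/- Let Γ ⊂ ℂ be a lattice and for integers m, n with m + n > 2 define the Eisenstein–Kronecker series E_{m,n}(z) = ∑_{γ ∈ Γ \ {0}} χ_z(γ)/(conj(γ)^m · γ^n) for z ∈ ℂ \ Γ, where χ_z(γ) = exp((γ·conj(z) − conj(γ)·z)/A). Then, as a function of z (smooth in the real-variable sense), E_{m,n} satisfies the partial differential equations ∂_z E_{m,n}(z) = −E_{m−1,n}(z)/A and ∂_{z̄} E_{m,n}(z) = E_{m,n−1}(z)/A, whenever m + n > 3 (so all occurring series converge absolutely and term-by-term differentiation is valid). -/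
/-!
Each summand `χ_z(γ) / (γ̄^m γ^n)` is a constant times the exponential of the real-linear map
`w ↦ (γ w̄ - γ̄ w) / A`, whose Wirtinger derivatives are `-γ̄ / A` and `γ / A`. Hence termwise
`∂_z` and `∂_{z̄}` multiply the summand by `-γ̄ / A` and `γ / A`, producing the summands of
`-E_{m-1,n} / A` and `E_{m,n-1} / A`. Since `|χ_z(γ)| = 1`, the differentiated series is
dominated uniformly in `z` by `(2 / A) ∑ |γ|^{1-m-n}`, which converges for `m + n > 3`, so the
series may be differentiated termwise.
-/

open Complex ComplexConjugate

noncomputable section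

namespace EisensteinKronecker

def wirtingerZ : (ℂ →L[ℝ] ℂ) →L[ℝ] ℂ :=
  (2 : ℂ)⁻¹ • (ContinuousLinearMap.apply ℝ ℂ 1 - I • ContinuousLinearMap.apply ℝ ℂ I)

def wirtingerZbar : (ℂ →L[ℝ] ℂ) →L[ℝ] ℂ :=
  (2 : ℂ)⁻¹ • (ContinuousLinearMap.apply ℝ ℂ 1 + I • ContinuousLinearMap.apply ℝ ℂ I)

lemma wirtingerZ_apply (D : ℂ →L[ℝ] ℂ) : wirtingerZ D = (D 1 - I * D I) / 2 := by
  simp only [wirtingerZ, smul_apply, sub_apply, ContinuousLinearMap.apply_apply, smul_eq_mul]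
  ring

lemma wirtingerZbar_apply (D : ℂ →L[ℝ] ℂ) : wirtingerZbar D = (D 1 + I * D I) / 2 := by
  simp only [wirtingerZbar, smul_apply, add_apply, ContinuousLinearMap.apply_apply, smul_eq_mul]
  ring

lemma wirtingerZ_smul (c : ℂ) (D : ℂ →L[ℝ] ℂ) : wirtingerZ (c • D) = c * wirtingerZ D := by
  simp only [wirtingerZ_apply, smul_apply, smul_eq_mul]
  ring

lemma wirtingerZbar_smul (c : ℂ) (D : ℂ →L[ℝ] ℂ) :
    wirtingerZbar (c • D) = c * wirtingerZbar D := by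
  simp only [wirtingerZbar_apply, smul_apply, smul_eq_mul]
  ring

-- `χ_z(γ) = exp (charExponent A γ z)`
def charExponent (A : ℝ) (γ : ℂ) : ℂ →L[ℝ] ℂ :=
  (γ / A) • conjCLE.toContinuousLinearMap - (conj γ / A) • ContinuousLinearMap.id ℝ ℂ

lemma charExponent_apply (A : ℝ) (γ w : ℂ) :
    charExponent A γ w = (γ * conj w - conj γ * w) / A := by
  simp only [charExponent, sub_apply, smul_apply, ContinuousLinearEquiv.coe_coe,
    ContinuousAlgEquiv.coeCLE_apply, conjCAE_apply, smul_eq_mul, ContinuousLinearMap.id_apply]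
  ring

lemma charExponent_apply_re (A : ℝ) (γ w : ℂ) : (charExponent A γ w).re = 0 := by
  have : conj γ * w = conj (γ * conj w) := by simp
  rw [charExponent_apply, this, sub_conj]
  simp

lemma norm_charExponent_le {A : ℝ} (hA : 0 < A) (γ : ℂ) : ‖charExponent A γ‖ ≤ 2 * ‖γ‖ / A := by
  refine ContinuousLinearMap.opNorm_le_bound _ (by positivity) fun w ↦ ?_
  calc ‖charExponent A γ w‖ = ‖γ * conj w - conj γ * w‖ / A := by
        rw [charExponent_apply, norm_div, norm_real, Real.norm_of_nonneg hA.le]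
    _ ≤ (‖γ * conj w‖ + ‖conj γ * w‖) / A := by gcongr; exact norm_sub_le _ _
    _ = 2 * ‖γ‖ / A * ‖w‖ := by simp only [norm_mul, norm_conj]; ring

lemma wirtingerZ_charExponent (A : ℝ) (γ : ℂ) : wirtingerZ (charExponent A γ) = -conj γ / A := by
  rw [wirtingerZ_apply, charExponent_apply, charExponent_apply, map_one, conj_I]
  linear_combination (γ + conj γ) / (2 * A) * I_sq

lemma wirtingerZbar_charExponent (A : ℝ) (γ : ℂ) : wirtingerZbar (charExponent A γ) = γ / A := by
  rw [wirtingerZbar_apply, charExponent_apply, charExponent_apply, map_one, conj_I]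
  linear_combination -(γ + conj γ) / (2 * A) * I_sq

def ekTerm (A : ℝ) (m n : ℤ) (γ z : ℂ) : ℂ :=
  if γ = 0 then 0 else exp ((γ * conj z - conj γ * z) / A) / (conj γ ^ m * γ ^ n)

lemma hasFDerivAt_ekTerm (A : ℝ) (m n : ℤ) (γ z : ℂ) :
    HasFDerivAt (ekTerm A m n γ) (ekTerm A m n γ z • charExponent A γ) z := by
  by_cases hγ : γ = 0
  · subst hγ
    have h0 : ekTerm A m n 0 = fun _ ↦ 0 := funext fun _ ↦ if_pos rfl
    rw [h0]
    exact (hasFDerivAt_const 0 z).congr_fderiv (zero_smul ℂ _).symm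
  · have hterm : ekTerm A m n γ = fun w ↦ exp (charExponent A γ w) * (conj γ ^ m * γ ^ n)⁻¹ :=
      funext fun w ↦ by rw [ekTerm, if_neg hγ, charExponent_apply, div_eq_mul_inv]
    rw [hterm]
    exact ((charExponent A γ).hasFDerivAt.cexp.mul_const _).congr_fderiv
      (by rw [smul_smul, mul_comm])

lemma norm_ekTerm_le (A : ℝ) (m n : ℤ) (γ z : ℂ) : ‖ekTerm A m n γ z‖ ≤ ‖γ‖ ^ (-(m + n)) := by
  by_cases hγ : γ = 0
  · simp only [ekTerm, hγ, if_true, norm_zero]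
    positivity
  · have hγ' : ‖γ‖ ≠ 0 := norm_ne_zero_iff.mpr hγ
    rw [ekTerm, if_neg hγ, ← charExponent_apply, norm_div, norm_exp, charExponent_apply_re,
      Real.exp_zero, norm_mul, norm_zpow, norm_zpow, norm_conj, ← zpow_add₀ hγ', zpow_neg,
      one_div]

lemma norm_ekTerm_smul_charExponent_le {A : ℝ} (hA : 0 < A) (m n : ℤ) (γ z : ℂ) :
    ‖ekTerm A m n γ z • charExponent A γ‖ ≤ 2 / A * ‖γ‖ ^ (1 - (m + n)) := by
  by_cases hγ : γ = 0
  · simp only [ekTerm, hγ, if_true, norm_smul, norm_zero, zero_mul]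
    positivity
  · have hγ' : ‖γ‖ ≠ 0 := norm_ne_zero_iff.mpr hγ
    calc ‖ekTerm A m n γ z • charExponent A γ‖ ≤ ‖γ‖ ^ (-(m + n)) * (2 * ‖γ‖ / A) := by
          rw [norm_smul]
          gcongr
          exacts [norm_ekTerm_le A m n γ z, norm_charExponent_le hA γ]
      _ = 2 / A * ‖γ‖ ^ (1 - (m + n)) := by
          rw [sub_eq_neg_add, zpow_add₀ hγ', zpow_one]
          ring

lemma ekTerm_mul_conj (A : ℝ) (m n : ℤ) (γ z : ℂ) :
    ekTerm A m n γ z * conj γ = ekTerm A (m - 1) n γ z := by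
  by_cases hγ : γ = 0
  · simp [ekTerm, hγ]
  · have hγ' : conj γ ≠ 0 := (map_ne_zero _).mpr hγ
    rw [ekTerm, ekTerm, if_neg hγ, if_neg hγ, zpow_sub_one₀ hγ']
    field_simp

lemma ekTerm_mul_self (A : ℝ) (m n : ℤ) (γ z : ℂ) :
    ekTerm A m n γ z * γ = ekTerm A m (n - 1) γ z := by
  by_cases hγ : γ = 0
  · simp [ekTerm, hγ]
  · rw [ekTerm, ekTerm, if_neg hγ, if_neg hγ, zpow_sub_one₀ hγ]
    field_simp

variable {ω₁ ω₂ : ℂ} {A : ℝ} {m n : ℤ}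

def latticePoint (ω₁ ω₂ : ℂ) (p : ℤ × ℤ) : ℂ := p.1 * ω₁ + p.2 * ω₂

lemma summable_norm_latticePoint_zpow (hindep : LinearIndependent ℝ ![ω₁, ω₂])
    {k : ℤ} (hk : k < -2) : Summable fun p ↦ ‖latticePoint ω₁ ω₂ p‖ ^ k := by
  let L : PeriodPair := ⟨ω₁, ω₂, hindep⟩
  have hL := ZLattice.summable_norm_zpow L.lattice k (by simpa using hk)
  have := (L.latticeEquivProd.symm.toEquiv.summable_iff).mpr hL
  simpa [Function.comp_def, latticePoint, PeriodPair.latticeEquiv_symm_apply] using this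

lemma conj_mul_im_ne_zero (hindep : LinearIndependent ℝ ![ω₁, ω₂]) :
    (conj ω₁ * ω₂).im ≠ 0 := by
  intro him
  have hreal : conj ω₁ * ω₂ = ((conj ω₁ * ω₂).re : ℂ) :=
    Complex.ext (ofReal_re _).symm (him.trans (ofReal_im _).symm)
  have hrel : (conj ω₁ * ω₂).re • ω₁ + (-normSq ω₁) • ω₂ = 0 := by
    rw [real_smul, real_smul, ← hreal, ofReal_neg, ← mul_conj]
    ring
  have hnormSq := (LinearIndependent.pair_iff.mp hindep _ _ hrel).2
  exact hindep.ne_zero 0 (by simpa using hnormSq)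

def ekSeries (ω₁ ω₂ : ℂ) (A : ℝ) (m n : ℤ) (z : ℂ) : ℂ :=
  ∑' p, ekTerm A m n (latticePoint ω₁ ω₂ p) z

lemma summable_ekTerm_smul_charExponent (hindep : LinearIndependent ℝ ![ω₁, ω₂]) (hA : 0 < A)
    (hmn : 3 < m + n) (z : ℂ) :
    Summable fun p ↦
      ekTerm A m n (latticePoint ω₁ ω₂ p) z • charExponent A (latticePoint ω₁ ω₂ p) :=
  ((summable_norm_latticePoint_zpow hindep (by omega)).mul_left (2 / A)).of_norm_bounded
    fun p ↦ norm_ekTerm_smul_charExponent_le hA m n _ z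

lemma hasFDerivAt_ekSeries (hindep : LinearIndependent ℝ ![ω₁, ω₂]) (hA : 0 < A)
    (hmn : 3 < m + n) (z : ℂ) :
    HasFDerivAt (ekSeries ω₁ ω₂ A m n)
      (∑' p, ekTerm A m n (latticePoint ω₁ ω₂ p) z • charExponent A (latticePoint ω₁ ω₂ p)) z :=
  hasFDerivAt_tsum ((summable_norm_latticePoint_zpow hindep (by omega)).mul_left (2 / A))
    (fun p w ↦ hasFDerivAt_ekTerm A m n _ w)
    (fun p w ↦ norm_ekTerm_smul_charExponent_le hA m n _ w)
    ((summable_norm_latticePoint_zpow hindep (by omega)).of_norm_bounded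
      fun p ↦ norm_ekTerm_le A m n _ z) z

lemma wirtingerZ_fderiv_ekSeries (hindep : LinearIndependent ℝ ![ω₁, ω₂]) (hA : 0 < A)
    (hmn : 3 < m + n) (z : ℂ) :
    wirtingerZ (fderiv ℝ (ekSeries ω₁ ω₂ A m n) z) = -ekSeries ω₁ ω₂ A (m - 1) n z / A := by
  rw [(hasFDerivAt_ekSeries hindep hA hmn z).fderiv,
    wirtingerZ.map_tsum (summable_ekTerm_smul_charExponent hindep hA hmn z), ekSeries,
    ← tsum_neg, ← tsum_div_const]
  refine tsum_congr fun p ↦ ?_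
  rw [wirtingerZ_smul, wirtingerZ_charExponent, ← ekTerm_mul_conj]
  ring

lemma wirtingerZbar_fderiv_ekSeries (hindep : LinearIndependent ℝ ![ω₁, ω₂]) (hA : 0 < A)
    (hmn : 3 < m + n) (z : ℂ) :
    wirtingerZbar (fderiv ℝ (ekSeries ω₁ ω₂ A m n) z) = ekSeries ω₁ ω₂ A m (n - 1) z / A := by
  rw [(hasFDerivAt_ekSeries hindep hA hmn z).fderiv,
    wirtingerZbar.map_tsum (summable_ekTerm_smul_charExponent hindep hA hmn z), ekSeries,
    ← tsum_div_const]
  refine tsum_congr fun p ↦ ?_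
  rw [wirtingerZbar_smul, wirtingerZbar_charExponent, ← ekTerm_mul_self]
  ring

end EisensteinKronecker

end

open EisensteinKronecker

theorem stmt_2_general (ω₁ ω₂ : ℂ) (hindep : LinearIndependent ℝ ![ω₁, ω₂])
    (A : ℝ) (hA : A = |((starRingEnd ℂ) ω₁ * ω₂).im| / Real.pi)
    (E : ℤ → ℤ → ℂ → ℂ)
    (hE : ∀ (m n : ℤ) (z : ℂ), E m n z =
      ∑' p : ℤ × ℤ,
        if ((p.1 : ℂ) * ω₁ + (p.2 : ℂ) * ω₂) = 0 then 0 else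
          Complex.exp ((((p.1 : ℂ) * ω₁ + (p.2 : ℂ) * ω₂) * (starRingEnd ℂ) z -
              (starRingEnd ℂ) ((p.1 : ℂ) * ω₁ + (p.2 : ℂ) * ω₂) * z) / (A : ℂ)) /
            (((starRingEnd ℂ) ((p.1 : ℂ) * ω₁ + (p.2 : ℂ) * ω₂)) ^ m *
              ((p.1 : ℂ) * ω₁ + (p.2 : ℂ) * ω₂) ^ n))
    (m n : ℤ) (hmn : 3 < m + n)
    (z : ℂ) :
    (fderiv ℝ (E m n) z 1 - Complex.I * fderiv ℝ (E m n) z Complex.I) / 2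
        = -(E (m - 1) n z) / (A : ℂ) ∧
    (fderiv ℝ (E m n) z 1 + Complex.I * fderiv ℝ (E m n) z Complex.I) / 2
        = E m (n - 1) z / (A : ℂ) := by
  obtain rfl : E = ekSeries ω₁ ω₂ A := funext fun m ↦ funext fun n ↦ funext (hE m n)
  have hApos : 0 < A := hA ▸ div_pos (abs_pos.mpr (conj_mul_im_ne_zero hindep)) Real.pi_pos
  rw [← wirtingerZ_apply, ← wirtingerZbar_apply]
  exact ⟨wirtingerZ_fderiv_ekSeries hindep hApos hmn z,
    wirtingerZbar_fderiv_ekSeries hindep hApos hmn z⟩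

/-- the Eisenstein–Kronecker series
`E_{m,n}(z) = ∑_{γ ∈ Γ∖{0}} χ_z(γ)/(γ̄^m γ^n)` satisfies, for `m + n > 3` and
`z ∉ Γ`, the Wirtinger differential equations `∂_z E_{m,n} = −E_{m−1,n}/A` and
`∂_z̄ E_{m,n} = E_{m,n−1}/A`. -/
theorem stmt_2 (ω₁ ω₂ : ℂ) (hindep : LinearIndependent ℝ ![ω₁, ω₂])
    (A : ℝ) (hA : A = |((starRingEnd ℂ) ω₁ * ω₂).im| / Real.pi)
    (E : ℤ → ℤ → ℂ → ℂ)
    (hE : ∀ (m n : ℤ) (z : ℂ), E m n z =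
      ∑' p : ℤ × ℤ,
        if ((p.1 : ℂ) * ω₁ + (p.2 : ℂ) * ω₂) = 0 then 0 else
          Complex.exp ((((p.1 : ℂ) * ω₁ + (p.2 : ℂ) * ω₂) * (starRingEnd ℂ) z -
              (starRingEnd ℂ) ((p.1 : ℂ) * ω₁ + (p.2 : ℂ) * ω₂) * z) / (A : ℂ)) /
            (((starRingEnd ℂ) ((p.1 : ℂ) * ω₁ + (p.2 : ℂ) * ω₂)) ^ m *
              ((p.1 : ℂ) * ω₁ + (p.2 : ℂ) * ω₂) ^ n))
    (m n : ℤ) (hmn : 3 < m + n)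
    (z : ℂ) (hz : ∀ p : ℤ × ℤ, z ≠ (p.1 : ℂ) * ω₁ + (p.2 : ℂ) * ω₂) :
    (fderiv ℝ (E m n) z 1 - Complex.I * fderiv ℝ (E m n) z Complex.I) / 2
        = -(E (m - 1) n z) / (A : ℂ) ∧
    (fderiv ℝ (E m n) z 1 + Complex.I * fderiv ℝ (E m n) z Complex.I) / 2
        = E m (n - 1) z / (A : ℂ) :=
  stmt_2_general ω₁ ω₂ hindep A hA E hE m n hmn z
end

section
/- In a commutative differential ℚ-algebra (R, ∂), let λ, F ∈ R and let (D_n)_{n≥0} be elements with D_0 arbitrary. Define ũ_{m,n} = λ^m F^n/(m!n!) (zero for negative indices), Λ_{m,n} = ∑_{m₀=1}^{m} ∑_{n₀=0}^{n} ũ_{m−m₀,n−n₀}·D_{m₀,n₀} for m ≥ 1, Λ_{0,n} = 0, where (D_{m,n}) satisfies ∂D_{m+1,n} = −D_{m,n}·∂λ − D_{m+1,n−1}·∂F for m,n ≥ 0 (with D_{m,n} = 0 for n < 0). Then ∂(Λ_{m,n}) = −∑_{n₀=0}^{n} ũ_{m−1,n−n₀}·D_{0,n₀}·∂λ. -/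
/-!
Since `ũ_{a,b} = (λ^a/a!)(F^b/b!)` factors into divided powers, which vanish at negative
index, it obeys `∂ũ_{a,b} = ũ_{a-1,b} ∂λ + ũ_{a,b-1} ∂F`. Combined with the recursion for `D`,
the derivative of each summand `ũ_{m-m₀,n-n₀} D_{m₀,n₀}` of `Λ_{m,n}` is a difference in `m₀`
plus a difference in `n₀`. Both sums telescope: the one in `n₀` vanishes at both ends
(`ũ_{·,-1} = 0`, `D_{·,-1} = 0`), and the one in `m₀` leaves only its `m₀ = 0` end.
-/

open Finset

theorem Finset.sum_range_sum_range_sub_add_sub {M : Type*} [AddCommGroup M]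
    (P Q : ℕ → ℕ → M) (m n : ℕ) :
    ∑ i ∈ range m, ∑ j ∈ range n, ((P (i + 1) j - P i j) + (Q i (j + 1) - Q i j)) =
      ∑ j ∈ range n, (P m j - P 0 j) + ∑ i ∈ range m, (Q i n - Q i 0) := by
  simp only [sum_add_distrib]
  congr 1
  · rw [sum_comm]
    exact sum_congr rfl fun j _ => sum_range_sub (P · j) m
  · exact sum_congr rfl fun i _ => sum_range_sub (Q i) n

def divPow {R : Type*} [Semiring R] [Algebra ℚ R] (x : R) (a : ℤ) : R :=
  if 0 ≤ a then x ^ a.toNat * algebraMap ℚ R (1 / a.toNat.factorial) else 0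

theorem divPow_of_neg {R : Type*} [Semiring R] [Algebra ℚ R] (x : R) {a : ℤ} (ha : a < 0) :
    divPow x a = 0 :=
  if_neg ha.not_ge

theorem divPow_mul_divPow {R : Type*} [CommSemiring R] [Algebra ℚ R] (x y : R) (a b : ℤ) :
    divPow x a * divPow y b = if 0 ≤ a ∧ 0 ≤ b then x ^ a.toNat * y ^ b.toNat *
      algebraMap ℚ R (1 / (a.toNat.factorial * b.toNat.factorial)) else 0 := by
  unfold divPow
  split_ifs <;> simp_all [one_div]
  ring

theorem Derivation.map_divPow {R M : Type*} [CommSemiring R] [Algebra ℚ R] [AddCommMonoid M]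
    [Module R M] [Module ℚ M] (d : Derivation ℚ R M) (x : R) (a : ℤ) :
    d (divPow x a) = divPow x (a - 1) • d x := by
  rcases a with (_ | k) | k
  · simp [divPow]
  · have hk : ((k + 1 : ℕ) : ℚ) * (1 / (k + 1).factorial) = 1 / k.factorial := by
      rw [Nat.factorial_succ]; push_cast; field_simp
    simp only [divPow, Int.ofNat_eq_natCast, Nat.cast_nonneg, if_true, Int.toNat_natCast,
      Derivation.leibniz, Derivation.leibniz_pow, Derivation.map_algebraMap, smul_zero, zero_add,
      Nat.add_sub_cancel, ← Nat.cast_smul_eq_nsmul R, smul_smul]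
    rw [show ((k + 1 : ℕ) : ℤ) - 1 = k by omega, if_pos k.cast_nonneg, Int.toNat_natCast,
      ← hk, map_mul, _root_.map_natCast (algebraMap ℚ R)]
    ring_nf
  · simp [divPow_of_neg, Int.negSucc_lt_zero]

theorem Derivation.map_divPow_mul_divPow {R : Type*} [CommSemiring R] [Algebra ℚ R]
    (d : Derivation ℚ R R) (x y : R) (a b : ℤ) :
    d (divPow x a * divPow y b) =
      divPow x (a - 1) * divPow y b * d x + divPow x a * divPow y (b - 1) * d y := by
  rw [d.leibniz, d.map_divPow, d.map_divPow, smul_eq_mul, smul_eq_mul]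
  ring

def lambdaSum {R : Type*} [Semiring R] (u : ℤ → ℤ → R) (D : ℕ → ℤ → R) (m n : ℕ) : R :=
  ∑ m₀ ∈ Icc 1 m, ∑ n₀ ∈ range (n + 1), u ((m : ℤ) - (m₀ : ℤ)) ((n : ℤ) - (n₀ : ℤ)) * D m₀ n₀

theorem Derivation.map_lambdaSum {S R : Type*} [CommRing S] [CommRing R] [Algebra S R]
    (d : Derivation S R R) {l F : R} {u : ℤ → ℤ → R} {D : ℕ → ℤ → R}
    (hu : ∀ a b, d (u a b) = u (a - 1) b * d l + u a (b - 1) * d F)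
    (hu_left : ∀ b, u (-1) b = 0) (hu_right : ∀ a, u a (-1) = 0) (hD : ∀ k, D k (-1) = 0)
    (hDrec : ∀ k j : ℕ, d (D (k + 1) j) = -D k j * d l - D (k + 1) (j - 1) * d F) (m n : ℕ) :
    d (lambdaSum u D m n) = -∑ j ∈ range (n + 1), u (m - 1) (n - j) * D 0 j * d l := by
  have hΛ : lambdaSum u D m n = ∑ i ∈ range m, ∑ j ∈ range (n + 1),
      u (m - (i + 1 : ℕ)) (n - j) * D (i + 1) j := by
    rw [lambdaSum, ← Ico_add_one_right_eq_Icc, sum_Ico_eq_sum_range]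
    simp only [add_comm 1, Nat.add_sub_cancel]
  set P : ℕ → ℕ → R := fun k j => u (m - k - 1) (n - j) * D k j * d l
  set Q : ℕ → ℕ → R := fun i t => u (m - i - 1) (n - t) * D (i + 1) (t - 1) * d F
  have hstep : ∀ i j : ℕ, d (u (m - (i + 1 : ℕ)) (n - j) * D (i + 1) j) =
      (P (i + 1) j - P i j) + (Q i (j + 1) - Q i j) := by
    intro i j
    simp only [P, Q, Derivation.leibniz, hDrec, hu, smul_eq_mul]
    push_cast
    ring_nf
  simp only [hΛ, map_sum, hstep, sum_range_sum_range_sub_add_sub]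
  simp [P, Q, hu_left, hu_right, hD]

/-- with `ũ_{m,n} = λ^m F^n/(m!n!)` (zero for negative indices),
`D_{m,n}` satisfying `∂D_{m+1,n} = −D_{m,n}∂λ − D_{m+1,n−1}∂F` (and `D_{m,n} = 0` for
`n < 0`), and `Λ_{m,n} = ∑_{m₀=1}^{m}∑_{n₀=0}^{n} ũ_{m−m₀,n−n₀}·D_{m₀,n₀}`, one has
`∂(Λ_{m,n}) = −∑_{n₀=0}^{n} ũ_{m−1,n−n₀}·D_{0,n₀}·∂λ`. -/
theorem stmt_10 {R : Type*} [CommRing R] [Algebra ℚ R] (d : Derivation ℚ R R)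
    (l F : R) (u : ℤ → ℤ → R)
    (hu : ∀ m n : ℤ, u m n = if 0 ≤ m ∧ 0 ≤ n then
      l ^ m.toNat * F ^ n.toNat *
        algebraMap ℚ R (1 / (m.toNat.factorial * n.toNat.factorial)) else 0)
    (D : ℕ → ℤ → R)
    (hDneg : ∀ (m : ℕ) (n : ℤ), n < 0 → D m n = 0)
    (hDrec : ∀ (m : ℕ) (n : ℤ), 0 ≤ n →
      d (D (m + 1) n) = -D m n * d l - D (m + 1) (n - 1) * d F)
    (Λ : ℕ → ℕ → R)
    (hΛ : ∀ m n : ℕ, Λ m n = ∑ m₀ ∈ Icc 1 m, ∑ n₀ ∈ range (n + 1),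
      u ((m : ℤ) - (m₀ : ℤ)) ((n : ℤ) - (n₀ : ℤ)) * D m₀ (n₀ : ℤ)) :
    ∀ m n : ℕ, d (Λ m n) =
      -∑ n₀ ∈ range (n + 1),
        u ((m : ℤ) - 1) ((n : ℤ) - (n₀ : ℤ)) * D 0 (n₀ : ℤ) * d l := by
  obtain rfl : u = fun a b => divPow l a * divPow F b :=
    funext₂ fun a b => by rw [hu, divPow_mul_divPow]
  intro m n
  rw [hΛ]
  exact d.map_lambdaSum (d.map_divPow_mul_divPow l F)
    (fun b => by rw [divPow_of_neg l (by norm_num), zero_mul])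
    (fun a => by rw [divPow_of_neg F (by norm_num), mul_zero])
    (fun k => hDneg k (-1) (by norm_num)) (fun k j => hDrec k j j.cast_nonneg) m n
end

section
/- As a consequence of the theta distribution relation: for each b ≥ 0 and nonzero α ∈ O_K, the coefficient functions F_{z₀,b}(z) (defined by Θ_{z₀,0}(z,w) = ∑_{b≥0} F_{z₀,b}(z)w^{b−1}) satisfy ∑_{z_α ∈ (1/α)Γ/Γ} F_{z₀+z_α, b}(z) = α·ᾱ^{1−b}·F_{αz₀, b}(αz) as meromorphic functions of z. -/
/-!
Expanding each `w * Θ_{z₀+t}(z, w)` and summing over `t` gives a power series in `w` with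
coefficients `∑ₜ F_{z₀+t,b}(z)`; rescaling the expansion of `Θ_{αz₀}(αz, ·)` at `w/ᾱ` gives one
with coefficients `α ᾱ^{1-b} F_{αz₀,b}(αz)`. By the distribution relation both converge to the same
function on a punctured disc, and a power series is determined by its sum there, since the sum is
analytic at `0`.
-/

open Filter Topology FormalMultilinearSeries in
theorem eq_zero_of_hasSum_pow_mul_eq_zero {𝕜 : Type*} [NontriviallyNormedField 𝕜]
    [CompleteSpace 𝕜] {c : ℕ → 𝕜} {r : ℝ} (hr : 0 < r)
    (h : ∀ w : 𝕜, w ≠ 0 → ‖w‖ < r → HasSum (fun n => c n * w ^ n) 0) : c = 0 := by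
  set p := ofScalars 𝕜 c
  obtain ⟨w₀, hw₀, hw₀r⟩ := NormedField.exists_norm_lt 𝕜 hr
  have hp : 0 < p.radius := by
    refine lt_of_lt_of_le ?_ (p.le_radius_of_tendsto (r := ‖w₀‖₊) (l := 0) ?_)
    · simpa using hw₀
    · simpa [p, norm_mul, norm_pow] using
        (h w₀ (norm_pos_iff.mp hw₀) hw₀r).summable.tendsto_atTop_zero.norm
  have hf := (p.hasFPowerSeriesOnBall hp).hasFPowerSeriesAt
  have hsum_zero : ∀ᶠ w in 𝓝[≠] 0, p.sum w = 0 := by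
    filter_upwards [self_mem_nhdsWithin, nhdsWithin_le_nhds (Metric.ball_mem_nhds 0 hr)]
      with w hw hwr
    rw [mem_ball_zero_iff] at hwr
    change ofScalarsSum c w = 0
    simpa [ofScalars_sum_eq] using (h w hw hwr).tsum_eq
  have := hf.analyticAt.frequently_zero_iff_eventually_zero.mp hsum_zero.frequently
  simpa [p] using hf.eq_zero_of_eventually this

theorem eq_of_hasSum_pow_mul {𝕜 : Type*} [NontriviallyNormedField 𝕜] [CompleteSpace 𝕜]
    {a b : ℕ → 𝕜} {f : 𝕜 → 𝕜} {r : ℝ} (hr : 0 < r)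
    (ha : ∀ w : 𝕜, w ≠ 0 → ‖w‖ < r → HasSum (fun n => a n * w ^ n) (f w))
    (hb : ∀ w : 𝕜, w ≠ 0 → ‖w‖ < r → HasSum (fun n => b n * w ^ n) (f w)) : a = b := by
  refine sub_eq_zero.mp (eq_zero_of_hasSum_pow_mul_eq_zero hr fun w hw hwr => ?_)
  simpa [sub_mul] using (ha w hw hwr).sub (hb w hw hwr)

theorem HasSum.zpow_mul_of_div {𝕜 : Type*} [NormedField 𝕜] {a : ℕ → 𝕜} {β w s : 𝕜}
    (hβ : β ≠ 0) (h : HasSum (fun n => a n * (w / β) ^ n) s) :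
    HasSum (fun n : ℕ => β ^ (1 - (n : ℤ)) * a n * w ^ n) (β * s) := by
  refine (h.mul_left β).congr_fun fun n => ?_
  rw [zpow_sub₀ hβ, zpow_one, zpow_natCast, div_pow]
  field_simp

theorem stmt_15_general
    (Θ : ℂ → ℂ → ℂ → ℂ)
    (α : ℂ) (hα : α ≠ 0)
    (T : Finset ℂ)
    (F : ℂ → ℕ → ℂ → ℂ) (r : ℝ) (hr : 0 < r)
    (hF : ∀ (c x : ℂ) (w : ℂ), w ≠ 0 → ‖w‖ < r →
      HasSum (fun b : ℕ => F c b x * w ^ b) (w * Θ c x w))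
    (z₀ z : ℂ)
    (hdist : ∀ w : ℂ, w ≠ 0 →
      ∑ t ∈ T, Θ (z₀ + t) z w = α * Θ (α * z₀) (α * z) (w / (starRingEnd ℂ) α)) :
    ∀ b : ℕ, ∑ t ∈ T, F (z₀ + t) b z =
      α * ((starRingEnd ℂ) α) ^ (1 - (b : ℤ)) * F (α * z₀) b (α * z) := by
  set ᾱ := (starRingEnd ℂ) α
  have hᾱ : ᾱ ≠ 0 := (map_ne_zero _).mpr hα
  have hᾱr : 0 < r * ‖ᾱ‖ := by positivity
  refine congrFun (eq_of_hasSum_pow_mul (lt_min hr hᾱr)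
    (f := fun w => w * ∑ t ∈ T, Θ (z₀ + t) z w) (fun w hw hwr => ?_) (fun w hw hwr => ?_))
  · simpa [Finset.sum_mul, Finset.mul_sum] using
      hasSum_sum fun t _ => hF (z₀ + t) z w hw (hwr.trans_le (min_le_left _ _))
  · have hwᾱ : ‖w / ᾱ‖ < r := by
      rw [norm_div, div_lt_iff₀ (norm_pos_iff.mpr hᾱ)]
      exact hwr.trans_le (min_le_right _ _)
    have hval : α * (ᾱ * (w / ᾱ * Θ (α * z₀) (α * z) (w / ᾱ))) =
        w * ∑ t ∈ T, Θ (z₀ + t) z w := by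
      rw [hdist w hw]
      field_simp
    have hsum := ((hF (α * z₀) (α * z) _ (div_ne_zero hw hᾱ) hwᾱ).zpow_mul_of_div hᾱ).mul_left α
    rw [hval] at hsum
    exact hsum.congr_fun fun n => by ring

/-- distribution relation for the coefficient functions `F_{z₀,b}(z)` of
the Kronecker theta translates `Θ_{z₀,0}(z,w) = ∑_{b≥0} F_{z₀,b}(z)w^{b−1}`: assuming
the theta distribution relation `∑_{t∈T} Θ_{z₀+t,0}(z,w) = α·Θ_{αz₀,0}(αz,w/ᾱ)`, one
has `∑_{t∈T} F_{z₀+t,b}(z) = α·ᾱ^{1−b}·F_{αz₀,b}(αz)` for every `b ≥ 0`. -/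
theorem stmt_15 (θ : ℂ → ℂ) (A : ℝ) (hA : 0 < A)
    (Θ : ℂ → ℂ → ℂ → ℂ)
    (hΘ : ∀ c x w : ℂ, Θ c x w =
      Complex.exp (-(w * (starRingEnd ℂ) c) / (A : ℂ)) *
        (θ (x + c + w) / (θ (x + c) * θ w)))
    (α : ℂ) (hα : α ≠ 0)
    (T : Finset ℂ)
    (F : ℂ → ℕ → ℂ → ℂ) (r : ℝ) (hr : 0 < r)
    (hF : ∀ (c x : ℂ) (w : ℂ), w ≠ 0 → ‖w‖ < r →
      HasSum (fun b : ℕ => F c b x * w ^ b) (w * Θ c x w))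
    (z₀ z : ℂ)
    (hdist : ∀ w : ℂ, w ≠ 0 →
      ∑ t ∈ T, Θ (z₀ + t) z w = α * Θ (α * z₀) (α * z) (w / (starRingEnd ℂ) α)) :
    ∀ b : ℕ, ∑ t ∈ T, F (z₀ + t) b z =
      α * ((starRingEnd ℂ) α) ^ (1 - (b : ℤ)) * F (α * z₀) b (α * z) :=
  stmt_15_general Θ α hα T F r hr hF z₀ z hdist
end

section
/- Matrix form of the comparison isomorphism: let V be a free module over a commutative ℚ-algebra R with basis ω^{m,n} indexed by 0 ≤ m, m+n ≤ N, let c, g ∈ R, and define e^{m,k} := ∑_{n=k}^{N−m} (−c)^{n−k}/(n−k)! · ω^{m,n}. Suppose Φ is a σ-semilinear map on V with σ(c) = π̄·(c − g) that acts by Φ(ω^{m,n}) = π^{−m}π̄^{−n} ∑_{k=n}^{N−m} (−g)^{k−n}/(k−n)!·ω^{m,k}. Then the basis e^{m,k} diagonalizes Φ, namely Φ(e^{m,k}) = π^{−m}π̄^{−k}·e^{m,k} for all m, k. -/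
open Finset

lemma aux_binom16 {R : Type*} [CommRing R] [Algebra ℚ R] (x y : R) (d : ℕ) :
    ∑ i ∈ Finset.range (d+1),
      (x ^ i * algebraMap ℚ R (1 / i.factorial)) *
        (y ^ (d - i) * algebraMap ℚ R (1 / (d - i).factorial))
      = (x + y) ^ d * algebraMap ℚ R (1 / d.factorial) := by
  rw [add_pow, Finset.sum_mul]
  refine Finset.sum_congr rfl fun i hi => ?_
  have hid : i ≤ d := Nat.lt_succ_iff.mp (Finset.mem_range.mp hi)
  have hq : (algebraMap ℚ R) (1 / i.factorial) * algebraMap ℚ R (1 / (d - i).factorial)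
      = algebraMap ℚ R ((d.choose i : ℚ) * (1 / d.factorial)) := by
    rw [← map_mul]
    congr 1
    rw [Nat.cast_choose ℚ hid]
    field_simp
  calc (x ^ i * algebraMap ℚ R (1 / i.factorial)) *
        (y ^ (d - i) * algebraMap ℚ R (1 / (d - i).factorial))
      = x ^ i * y ^ (d - i) * ((algebraMap ℚ R) (1 / i.factorial) * algebraMap ℚ R (1 / (d - i).factorial)) := by ring
    _ = x ^ i * y ^ (d - i) * ((d.choose i : R) * algebraMap ℚ R (1 / d.factorial)) := by
        rw [hq, map_mul]; norm_num
    _ = x ^ i * y ^ (d - i) * (d.choose i : R) * algebraMap ℚ R (1 / d.factorial) := by ring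


/-- diagonalization of the semilinear Frobenius.  Let `Φ` be an additive,
`σ`-semilinear endomorphism of a module `V` with vectors `ω^{m,n}` (for `m + n ≤ N`)
on which `Φ(ω^{m,n}) = π^{−m}π̄^{−n} ∑_{k=n}^{N−m} (−g)^{k−n}/(k−n)!·ω^{m,k}`, where
`σ(c)/π̄ = c − g`.  Then the vectors `e^{m,k} := ∑_{n=k}^{N−m} (−c)^{n−k}/(n−k)!·ω^{m,n}`
satisfy `Φ(e^{m,k}) = π^{−m}π̄^{−k}·e^{m,k}`. -/
theorem stmt_16 {R V : Type*} [CommRing R] [Algebra ℚ R] [AddCommGroup V] [Module R V]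
    (σ : R →ₐ[ℚ] R) (π πb : Rˣ) (c g : R) (hσc : σ c = (πb : R) * (c - g))
    (N : ℕ) (ω : ℕ → ℕ → V) (Φ : V →+ V)
    (hsemi : ∀ (r : R) (v : V), Φ (r • v) = σ r • Φ v)
    (hΦω : ∀ m n : ℕ, m + n ≤ N →
      Φ (ω m n) = (((π⁻¹ : Rˣ) : R) ^ m * ((πb⁻¹ : Rˣ) : R) ^ n) •
        ∑ k ∈ Icc n (N - m),
          ((-g) ^ (k - n) * algebraMap ℚ R (1 / (k - n).factorial)) • ω m k)
    (e : ℕ → ℕ → V)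
    (he : ∀ m k : ℕ, e m k = ∑ n ∈ Icc k (N - m),
      ((-c) ^ (n - k) * algebraMap ℚ R (1 / (n - k).factorial)) • ω m n) :
    ∀ m k : ℕ, m + k ≤ N →
      Φ (e m k) = (((π⁻¹ : Rˣ) : R) ^ m * ((πb⁻¹ : Rˣ) : R) ^ k) • e m k := by
  intro m k hmk
  set p : R := ((π⁻¹ : Rˣ) : R) with hp
  set pb : R := ((πb⁻¹ : Rˣ) : R) with hpb
  set A := N - m with hA
  have hkA : k ≤ A := by omega
  have hmn : ∀ n, n ≤ A → m + n ≤ N := by omega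
  -- cancellation lemma for pb
  have hpb1 : pb * (πb : R) = 1 := by
    rw [hpb]; exact Units.inv_mul πb
  have hpbpow : ∀ {a b : ℕ}, a ≤ b → pb ^ b * (πb : R) ^ (b - a) = pb ^ a := by
    intro a b hab
    have : b = a + (b - a) := by omega
    rw [this, pow_add, Nat.add_sub_cancel_left, mul_assoc, ← mul_pow, hpb1, one_pow, mul_one]
  -- action of σ on the coefficients
  have hσpow : ∀ d : ℕ, σ ((-c) ^ d * algebraMap ℚ R (1 / d.factorial))
      = (πb : R) ^ d * ((g - c) ^ d * algebraMap ℚ R (1 / d.factorial)) := by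
    intro d
    rw [map_mul, map_pow, map_neg, hσc, AlgHom.commutes]
    have : -((πb : R) * (c - g)) = (πb : R) * (g - c) := by ring
    rw [this, mul_pow, mul_assoc]
  -- expand Φ (e m k)
  rw [he, map_sum]
  have step1 : ∀ n ∈ Icc k A,
      Φ (((-c) ^ (n - k) * algebraMap ℚ R (1 / (n - k).factorial)) • ω m n)
      = ∑ j ∈ Icc n A,
          (σ ((-c) ^ (n - k) * algebraMap ℚ R (1 / (n - k).factorial)) *
            (p ^ m * pb ^ n) *
            ((-g) ^ (j - n) * algebraMap ℚ R (1 / (j - n).factorial))) • ω m j := by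
    intro n hn
    obtain ⟨hn1, hn2⟩ := Finset.mem_Icc.mp hn
    rw [hsemi, hΦω m n (hmn n hn2), smul_smul, Finset.smul_sum]
    exact Finset.sum_congr rfl fun j _ => by rw [smul_smul]
  rw [Finset.sum_congr rfl step1]
  -- swap the order of summation (triangle)
  have hswap :
      ∑ n ∈ Icc k A, ∑ j ∈ Icc n A,
          (σ ((-c) ^ (n - k) * algebraMap ℚ R (1 / (n - k).factorial)) *
            (p ^ m * pb ^ n) *
            ((-g) ^ (j - n) * algebraMap ℚ R (1 / (j - n).factorial))) • ω m j
      = ∑ j ∈ Icc k A, ∑ n ∈ Icc k j,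
          (σ ((-c) ^ (n - k) * algebraMap ℚ R (1 / (n - k).factorial)) *
            (p ^ m * pb ^ n) *
            ((-g) ^ (j - n) * algebraMap ℚ R (1 / (j - n).factorial))) • ω m j := by
    have h1 : ∀ x y : ℕ, Icc x y = Ico x (y + 1) := fun x y => by
      rw [Finset.Ico_add_one_right_eq_Icc]
    simp only [h1]
    exact Finset.sum_Ico_Ico_comm k (A + 1) _
  rw [hswap]
  -- compute the right-hand side
  rw [Finset.smul_sum]
  refine Finset.sum_congr rfl fun j hj => ?_
  obtain ⟨hj1, hj2⟩ := Finset.mem_Icc.mp hj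
  rw [smul_smul, ← Finset.sum_smul]
  congr 1
  -- now a pure scalar identity
  have hsimp : ∀ n ∈ Icc k j,
      σ ((-c) ^ (n - k) * algebraMap ℚ R (1 / (n - k).factorial)) *
        (p ^ m * pb ^ n) *
        ((-g) ^ (j - n) * algebraMap ℚ R (1 / (j - n).factorial))
      = (p ^ m * pb ^ k) *
          (((g - c) ^ (n - k) * algebraMap ℚ R (1 / (n - k).factorial)) *
            ((-g) ^ (j - n) * algebraMap ℚ R (1 / (j - n).factorial))) := by
    intro n hn
    obtain ⟨hn1, hn2⟩ := Finset.mem_Icc.mp hn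
    rw [hσpow]
    have hcancel : pb ^ n * (πb : R) ^ (n - k) = pb ^ k := hpbpow hn1
    calc (πb : R) ^ (n - k) * ((g - c) ^ (n - k) * algebraMap ℚ R (1 / (n - k).factorial)) *
          (p ^ m * pb ^ n) *
          ((-g) ^ (j - n) * algebraMap ℚ R (1 / (j - n).factorial))
        = (p ^ m * (pb ^ n * (πb : R) ^ (n - k))) *
            (((g - c) ^ (n - k) * algebraMap ℚ R (1 / (n - k).factorial)) *
              ((-g) ^ (j - n) * algebraMap ℚ R (1 / (j - n).factorial))) := by ring
      _ = _ := by rw [hcancel]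
  rw [Finset.sum_congr rfl hsimp, ← Finset.mul_sum]
  -- reindex and apply the binomial identity
  have hrange : ∑ n ∈ Icc k j,
      ((g - c) ^ (n - k) * algebraMap ℚ R (1 / (n - k).factorial)) *
        ((-g) ^ (j - n) * algebraMap ℚ R (1 / (j - n).factorial))
      = ∑ i ∈ Finset.range (j - k + 1),
      ((g - c) ^ i * algebraMap ℚ R (1 / i.factorial)) *
        ((-g) ^ (j - k - i) * algebraMap ℚ R (1 / (j - k - i).factorial)) := by
    rw [← Finset.Ico_add_one_right_eq_Icc, Finset.sum_Ico_eq_sum_range]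
    have : j + 1 - k = j - k + 1 := by omega
    rw [this]
    refine Finset.sum_congr rfl fun i hi => ?_
    have hi' : i ≤ j - k := Nat.lt_succ_iff.mp (Finset.mem_range.mp hi)
    have e1 : k + i - k = i := by omega
    have e2 : j - (k + i) = j - k - i := by omega
    rw [e1, e2]
  rw [hrange, aux_binom16]
  have : g - c + -g = -c := by ring
  rw [this]
end
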